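/- arXiv:1908.05083 — 2 statements merged into one kernel-verified Lean document; each statement's English description precedes it below -/
import Mathlib

section
/- Assume p > q. For every 1 ≤ k ≤ p−q, the N-orbit of e_k is N(e_k) = { e_k + s_1 w_1 + ⋯ + s_q w_q : s_1, …, s_q ∈ ℝ }. -/
open Matrix

noncomputable section

/-- 1-based standard basis vector `e i` of `ℝ^n` (zero if `i` is out of range). -/
def stdE (n i : ℕ) : Fin n → ℝ := fun j => if (j : ℕ) + 1 = i then 1 else 0

/-- `w i := e_{p-i+1} - e_{p+i}`. -/
def wVec (p q i : ℕ) : Fin (p + q) → ℝ := stdE (p + q) (p - i + 1) - stdE (p + q) (p + i)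

/-- `v i := e_{p-i+1} + e_{p+i}`. -/
def vVec (p q i : ℕ) : Fin (p + q) → ℝ := stdE (p + q) (p - i + 1) + stdE (p + q) (p + i)

/-- The scalar product of signature `(p,q)` on `ℝ^{p+q}`. -/
def ip (p q : ℕ) (x y : Fin (p + q) → ℝ) : ℝ :=
  ∑ i : Fin (p + q), (if (i : ℕ) < p then (1 : ℝ) else -1) * x i * y i

/-- The matrix `J = diag(I_p, -I_q)`. -/
def Jmat (p q : ℕ) : Matrix (Fin (p + q)) (Fin (p + q)) ℝ :=
  Matrix.diagonal (fun i => if (i : ℕ) < p then (1 : ℝ) else -1)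

/-- Entry of a square matrix, with 1-based indices (0 outside the range). -/
def ent {n : ℕ} (X : Matrix (Fin n) (Fin n) ℝ) (i j : ℕ) : ℝ :=
  if h : i - 1 < n ∧ j - 1 < n then X ⟨i - 1, h.1⟩ ⟨j - 1, h.2⟩ else 0

/-- Coordinate of a vector, with 1-based index (0 outside the range). -/
def vent {n : ℕ} (x : Fin n → ℝ) (i : ℕ) : ℝ :=
  if h : i - 1 < n then x ⟨i - 1, h⟩ else 0

lemma ent_zero {n : ℕ} (i j : ℕ) : ent (0 : Matrix (Fin n) (Fin n) ℝ) i j = 0 := by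
  unfold ent; split <;> simp

lemma ent_add {n : ℕ} (X Y : Matrix (Fin n) (Fin n) ℝ) (i j : ℕ) :
    ent (X + Y) i j = ent X i j + ent Y i j := by
  unfold ent; split <;> simp [Matrix.add_apply]

lemma ent_smul {n : ℕ} (c : ℝ) (X : Matrix (Fin n) (Fin n) ℝ) (i j : ℕ) :
    ent (c • X) i j = c * ent X i j := by
  unfold ent; split <;> simp [Matrix.smul_apply]

/-- The Lie algebra `𝔰𝔬(p,q)`, as a set of matrices. -/
def soSet (p q : ℕ) : Set (Matrix (Fin (p + q)) (Fin (p + q)) ℝ) :=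
  {X | Xᵀ * Jmat p q + Jmat p q * X = 0}

lemma soSet_zero (p q : ℕ) : (0 : Matrix (Fin (p + q)) (Fin (p + q)) ℝ) ∈ soSet p q := by
  simp [soSet]

lemma soSet_add (p q : ℕ) {X Y : Matrix (Fin (p + q)) (Fin (p + q)) ℝ}
    (hX : X ∈ soSet p q) (hY : Y ∈ soSet p q) : X + Y ∈ soSet p q := by
  simp only [soSet, Set.mem_setOf_eq] at *
  rw [Matrix.transpose_add, Matrix.add_mul, Matrix.mul_add,
    show Xᵀ * Jmat p q + Yᵀ * Jmat p q + (Jmat p q * X + Jmat p q * Y)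
      = (Xᵀ * Jmat p q + Jmat p q * X) + (Yᵀ * Jmat p q + Jmat p q * Y) by abel,
    hX, hY, add_zero]

lemma soSet_smul (p q : ℕ) (c : ℝ) {X : Matrix (Fin (p + q)) (Fin (p + q)) ℝ}
    (hX : X ∈ soSet p q) : c • X ∈ soSet p q := by
  simp only [soSet, Set.mem_setOf_eq] at *
  rw [Matrix.transpose_smul, Matrix.smul_mul, Matrix.mul_smul, ← smul_add, hX, smul_zero]

/-- The set `𝔭` of symmetric elements of `𝔰𝔬(p,q)` (Cartan decomposition). -/
def pSet (p q : ℕ) : Set (Matrix (Fin (p + q)) (Fin (p + q)) ℝ) :=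
  {X | X ∈ soSet p q ∧ Xᵀ = X}

/-- The nilpotent Iwasawa factor `𝔫`, as a set of matrices; the conditions are the
entry conditions on the blocks `A`, `B`, `D` (1-based indices; `A i j = ent X i j`,
`B i l = ent X i (p + l)`, `D i j = ent X (p + i) (p + j)`). -/
def nSet (p q : ℕ) : Set (Matrix (Fin (p + q)) (Fin (p + q)) ℝ) :=
  {X | X ∈ soSet p q ∧
    (∀ i j, 1 ≤ i → i ≤ p - q → 1 ≤ j → j ≤ p - q → ent X i j = 0) ∧
    (∀ l, 1 ≤ l → l ≤ q → ent X (p - l + 1) (p + l) = 0) ∧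
    (∀ k l, 1 ≤ k → k ≤ p - q → 1 ≤ l → l ≤ q →
      ent X k (p - l + 1) = ent X k (p + l)) ∧
    (∀ i j, 1 ≤ i → i < j → j ≤ q →
      ent X (p + 1 - j) (p + 1 - i) = ent X (p + 1 - j) (p + i)) ∧
    (∀ i j, 1 ≤ i → i < j → j ≤ q →
      ent X (p + i) (p + j) = - ent X (p + 1 - i) (p + j))}

/-- The abelian factor `𝔞`, as a set of matrices: all entries vanish except the
pairs in positions `(p-l+1, p+l)` and `(p+l, p-l+1)`, `1 ≤ l ≤ q`, which are equal. -/
def aSet (p q : ℕ) : Set (Matrix (Fin (p + q)) (Fin (p + q)) ℝ) :=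
  {X | (∀ l, 1 ≤ l → l ≤ q → ent X (p - l + 1) (p + l) = ent X (p + l) (p - l + 1)) ∧
    (∀ i j, 1 ≤ i → i ≤ p + q → 1 ≤ j → j ≤ p + q →
      (¬ ∃ l, 1 ≤ l ∧ l ≤ q ∧ ((i = p - l + 1 ∧ j = p + l) ∨ (i = p + l ∧ j = p - l + 1))) →
      ent X i j = 0)}

/-- `𝔨₀`: skew-symmetric upper-left `(p-q)×(p-q)` block, all other entries zero. -/
def kSet (p q : ℕ) : Set (Matrix (Fin (p + q)) (Fin (p + q)) ℝ) :=
  {X | (∀ i j, 1 ≤ i → i ≤ p - q → 1 ≤ j → j ≤ p - q → ent X i j = - ent X j i) ∧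
    (∀ i j, 1 ≤ i → i ≤ p + q → 1 ≤ j → j ≤ p + q →
      ¬(i ≤ p - q ∧ j ≤ p - q) → ent X i j = 0)}

/-- The nilpotent Iwasawa factor `𝔫` as an `ℝ`-subspace of `M_{p+q}(ℝ)`. -/
def nSub (p q : ℕ) : Submodule ℝ (Matrix (Fin (p + q)) (Fin (p + q)) ℝ) where
  carrier := nSet p q
  zero_mem' := by
    refine ⟨soSet_zero p q, ?_, ?_, ?_, ?_, ?_⟩ <;> intros <;> simp [ent_zero]
  add_mem' := by
    rintro X Y ⟨h0, h1, h2, h3, h4, h5⟩ ⟨g0, g1, g2, g3, g4, g5⟩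
    refine ⟨soSet_add p q h0 g0, ?_, ?_, ?_, ?_, ?_⟩
    · intro i j hi hi' hj hj'
      rw [ent_add, h1 i j hi hi' hj hj', g1 i j hi hi' hj hj', add_zero]
    · intro l hl hl'
      rw [ent_add, h2 l hl hl', g2 l hl hl', add_zero]
    · intro k l hk hk' hl hl'
      rw [ent_add, ent_add, h3 k l hk hk' hl hl', g3 k l hk hk' hl hl']
    · intro i j hi hij hj
      rw [ent_add, ent_add, h4 i j hi hij hj, g4 i j hi hij hj]
    · intro i j hi hij hj
      rw [ent_add, ent_add, h5 i j hi hij hj, g5 i j hi hij hj]; ring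
  smul_mem' := by
    rintro c X ⟨h0, h1, h2, h3, h4, h5⟩
    refine ⟨soSet_smul p q c h0, ?_, ?_, ?_, ?_, ?_⟩
    · intro i j hi hi' hj hj'
      rw [ent_smul, h1 i j hi hi' hj hj', mul_zero]
    · intro l hl hl'
      rw [ent_smul, h2 l hl hl', mul_zero]
    · intro k l hk hk' hl hl'
      rw [ent_smul, ent_smul, h3 k l hk hk' hl hl']
    · intro i j hi hij hj
      rw [ent_smul, ent_smul, h4 i j hi hij hj]
    · intro i j hi hij hj
      rw [ent_smul, ent_smul, h5 i j hi hij hj]; ring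

/-- The abelian factor `𝔞` as an `ℝ`-subspace of `M_{p+q}(ℝ)`. -/
def aSub (p q : ℕ) : Submodule ℝ (Matrix (Fin (p + q)) (Fin (p + q)) ℝ) where
  carrier := aSet p q
  zero_mem' := by
    refine ⟨?_, ?_⟩ <;> intros <;> simp [ent_zero]
  add_mem' := by
    rintro X Y ⟨h1, h2⟩ ⟨g1, g2⟩
    refine ⟨?_, ?_⟩
    · intro l hl hl'
      rw [ent_add, ent_add, h1 l hl hl', g1 l hl hl']
    · intro i j hi hi' hj hj' hne
      rw [ent_add, h2 i j hi hi' hj hj' hne, g2 i j hi hi' hj hj' hne, add_zero]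
  smul_mem' := by
    rintro c X ⟨h1, h2⟩
    refine ⟨?_, ?_⟩
    · intro l hl hl'
      rw [ent_smul, ent_smul, h1 l hl hl']
    · intro i j hi hi' hj hj' hne
      rw [ent_smul, h2 i j hi hi' hj hj' hne, mul_zero]

/-- `𝔨₀` as an `ℝ`-subspace of `M_{p+q}(ℝ)`. -/
def kSub (p q : ℕ) : Submodule ℝ (Matrix (Fin (p + q)) (Fin (p + q)) ℝ) where
  carrier := kSet p q
  zero_mem' := by
    refine ⟨?_, ?_⟩ <;> intros <;> simp [ent_zero]
  add_mem' := by
    rintro X Y ⟨h1, h2⟩ ⟨g1, g2⟩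
    refine ⟨?_, ?_⟩
    · intro i j hi hi' hj hj'
      rw [ent_add, ent_add, h1 i j hi hi' hj hj', g1 i j hi hi' hj hj']; ring
    · intro i j hi hi' hj hj' hne
      rw [ent_add, h2 i j hi hi' hj hj' hne, g2 i j hi hi' hj hj' hne, add_zero]
  smul_mem' := by
    rintro c X ⟨h1, h2⟩
    refine ⟨?_, ?_⟩
    · intro i j hi hi' hj hj'
      rw [ent_smul, ent_smul, h1 i j hi hi' hj hj']; ring
    · intro i j hi hi' hj hj' hne
      rw [ent_smul, h2 i j hi hi' hj hj' hne, mul_zero]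

/-- The subspace `{X ∈ M_n(ℝ) : X x = 0}`. -/
def kerAt {n : ℕ} (x : Fin n → ℝ) : Submodule ℝ (Matrix (Fin n) (Fin n) ℝ) where
  carrier := {X | X *ᵥ x = 0}
  zero_mem' := by simp [Matrix.zero_mulVec]
  add_mem' := by
    intro X Y hX hY
    simp only [Set.mem_setOf_eq] at *
    rw [Matrix.add_mulVec, hX, hY, add_zero]
  smul_mem' := by
    intro c X hX
    simp only [Set.mem_setOf_eq] at *
    rw [Matrix.smul_mulVec, hX, smul_zero]

/-- The exponential of a matrix, as a unit of `M_n(ℝ)`, i.e. an element of `GL(n, ℝ)`. -/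
def expUnit {n : ℕ} (X : Matrix (Fin n) (Fin n) ℝ) : (Matrix (Fin n) (Fin n) ℝ)ˣ where
  val := NormedSpace.exp X
  inv := NormedSpace.exp (-X)
  val_inv := by
    rw [← Matrix.exp_add_of_commute X (-X) (Commute.neg_right (Commute.refl X)),
      add_neg_cancel, NormedSpace.exp_zero]
  inv_val := by
    rw [← Matrix.exp_add_of_commute (-X) X (Commute.neg_left (Commute.refl X)),
      neg_add_cancel, NormedSpace.exp_zero]

/-- The subgroup `N = exp(𝔫)` of `GL(p+q, ℝ)` generated by exponentials of elements of `𝔫`. -/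
def Ngrp (p q : ℕ) : Subgroup (Matrix (Fin (p + q)) (Fin (p + q)) ℝ)ˣ :=
  Subgroup.closure {g | ∃ X ∈ nSet p q, g = expUnit X}

/-- The subgroup `AN` of `GL(p+q, ℝ)` generated by exponentials of elements of `𝔞 ∪ 𝔫`. -/
def ANgrp (p q : ℕ) : Subgroup (Matrix (Fin (p + q)) (Fin (p + q)) ℝ)ˣ :=
  Subgroup.closure {g | ∃ X ∈ aSet p q ∪ nSet p q, g = expUnit X}

/-- The subgroup `Q = K₀AN` of `GL(p+q, ℝ)` generated by exponentials of `𝔨₀ ∪ 𝔞 ∪ 𝔫`. -/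
def Qgrp (p q : ℕ) : Subgroup (Matrix (Fin (p + q)) (Fin (p + q)) ℝ)ˣ :=
  Subgroup.closure {g | ∃ X ∈ kSet p q ∪ aSet p q ∪ nSet p q, g = expUnit X}

/-- The orbit `G(x)` of a point `x ∈ ℝ^n` under a subgroup `G` of `GL(n, ℝ)`. -/
def orb {n : ℕ} (G : Subgroup (Matrix (Fin n) (Fin n) ℝ)ˣ) (x : Fin n → ℝ) :
    Set (Fin n → ℝ) :=
  {v | ∃ g ∈ G, (g : Matrix (Fin n) (Fin n) ℝ) *ᵥ x = v}

end

/-!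
Let `W = span(w_1, …, w_q)`. Every `X ∈ 𝔫` maps `e_k` into `W` and `W` into itself, so all terms
`X^i v / i!` with `i ≥ 1` of `exp(X) v` lie in the closed subspace `W`: each `exp X`, hence all
of `N`, preserves the affine subspace `e_k + W`. Conversely, for `w ∈ W` the element `w ∧ e_k` of
`𝔰𝔬(p,q)` lies in `𝔫`, sends `e_k` to `w` and kills `w`, because `W` is totally isotropic and
orthogonal to `e_k`; so its exponential sends `e_k` to `e_k + w`.
-/

section MatrixExp

variable {𝕂 : Type*} [RCLike 𝕂] {ι : Type*} [Fintype ι] [DecidableEq ι]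

open scoped Norms.Operator in
theorem hasSum_exp_mulVec (X : Matrix ι ι 𝕂) (v : ι → 𝕂) :
    HasSum (fun i => (i.factorial : 𝕂)⁻¹ • (X ^ i *ᵥ v)) (NormedSpace.exp X *ᵥ v) := by
  let L : Matrix ι ι 𝕂 →L[𝕂] (ι → 𝕂) :=
    LinearMap.toContinuousLinearMap ((Matrix.mulVecBilin 𝕂 𝕂).flip v)
  convert (NormedSpace.exp_series_hasSum_exp' (𝕂 := 𝕂) X).mapL L using 1
  · ext i : 1
    rw [L.map_smul]
    rfl
  · rfl

theorem exp_mulVec_sub_mem {X : Matrix ι ι 𝕂} {W : Submodule 𝕂 (ι → 𝕂)} {v : ι → 𝕂}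
    (hv : X *ᵥ v ∈ W) (hW : ∀ w ∈ W, X *ᵥ w ∈ W) : NormedSpace.exp X *ᵥ v - v ∈ W := by
  have hpow : ∀ i, X ^ (i + 1) *ᵥ v ∈ W := by
    intro i
    induction i with
    | zero => simpa using hv
    | succ i ih => rw [pow_succ', ← Matrix.mulVec_mulVec]; exact hW _ ih
  have hsum := (hasSum_nat_add_iff' 1).mpr (hasSum_exp_mulVec X v)
  simp only [Finset.range_one, Finset.sum_singleton, pow_zero, Matrix.one_mulVec,
    Nat.factorial_zero, Nat.cast_one, inv_one, one_smul] at hsum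
  rw [← hsum.tsum_eq]
  exact tsum_mem W.closed_of_finiteDimensional fun i => W.smul_mem _ (hpow i)

theorem exp_mulVec_of_mulVec_mulVec_eq_zero {X : Matrix ι ι 𝕂} {v : ι → 𝕂}
    (h : X *ᵥ (X *ᵥ v) = 0) : NormedSpace.exp X *ᵥ v = v + X *ᵥ v := by
  have hvanish : ∀ i ∉ Finset.range 2, (i.factorial : 𝕂)⁻¹ • (X ^ i *ᵥ v) = 0 := by
    intro i hi
    obtain ⟨j, rfl⟩ : ∃ j, i = j + 2 := ⟨i - 2, by simp at hi; omega⟩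
    rw [pow_add, ← Matrix.mulVec_mulVec, sq, ← Matrix.mulVec_mulVec, h, Matrix.mulVec_zero,
      smul_zero]
  rw [(hasSum_exp_mulVec X v).unique (hasSum_sum_of_ne_finset_zero hvanish)]
  simp [Finset.sum_range_succ]

end MatrixExp

section Coordinates

variable {n : ℕ}

theorem vent_add (x y : Fin n → ℝ) (a : ℕ) : vent (x + y) a = vent x a + vent y a := by
  unfold vent; split <;> simp

theorem vent_sub (x y : Fin n → ℝ) (a : ℕ) : vent (x - y) a = vent x a - vent y a := by
  unfold vent; split <;> simp

theorem vent_smul (c : ℝ) (x : Fin n → ℝ) (a : ℕ) : vent (c • x) a = c * vent x a := by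
  unfold vent; split <;> simp

theorem vent_val_add_one (x : Fin n → ℝ) (a : Fin n) : vent x (a + 1) = x a := by
  simp [vent]

theorem ent_sub (X Y : Matrix (Fin n) (Fin n) ℝ) (i j : ℕ) :
    ent (X - Y) i j = ent X i j - ent Y i j := by
  unfold ent; split <;> simp

theorem ent_vecMulVec (x y : Fin n → ℝ) (i j : ℕ) :
    ent (vecMulVec x y) i j = vent x i * vent y j := by
  unfold ent vent
  by_cases hi : i - 1 < n <;> by_cases hj : j - 1 < n <;> simp [hi, hj, vecMulVec_apply]

theorem stdE_eq_single {i : ℕ} (hi1 : 1 ≤ i) (hi2 : i ≤ n) :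
    stdE n i = Pi.single ⟨i - 1, by omega⟩ 1 := by
  ext j
  simp only [stdE, Pi.single_apply, Fin.ext_iff]
  congr 1
  exact propext (by omega)

-- `1 ≤ a` matters: truncated subtraction makes `vent x 0 = vent x 1`.
theorem vent_stdE {i a : ℕ} (hi : i ≤ n) (ha : 1 ≤ a) :
    vent (stdE n i) a = if a = i then 1 else 0 := by
  unfold vent stdE
  split
  · simp only [Nat.sub_add_cancel ha]
  · rw [if_neg (by omega)]

theorem vent_mulVec_stdE (X : Matrix (Fin n) (Fin n) ℝ) {i : ℕ} (hi1 : 1 ≤ i) (hi2 : i ≤ n)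
    (a : ℕ) : vent (X *ᵥ stdE n i) a = ent X a i := by
  rw [stdE_eq_single hi1 hi2, mulVec_single_one]
  unfold vent ent
  by_cases ha : a - 1 < n <;> simp [ha, show i - 1 < n by omega]

end Coordinates

section Signature

variable {p q : ℕ}

theorem vent_Jmat_mulVec (x : Fin (p + q) → ℝ) {a : ℕ} (ha : 1 ≤ a) :
    vent (Jmat p q *ᵥ x) a = (if a ≤ p then 1 else -1) * vent x a := by
  unfold vent Jmat
  split
  · simp only [mulVec_diagonal, show a - 1 < p ↔ a ≤ p by omega]
  · rw [mul_zero]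

theorem ip_eq_dotProduct (x y : Fin (p + q) → ℝ) : ip p q x y = (Jmat p q *ᵥ x) ⬝ᵥ y := by
  simp [ip, Jmat, dotProduct, mulVec_diagonal]

theorem ip_comm (x y : Fin (p + q) → ℝ) : ip p q x y = ip p q y x := by
  simp only [ip, mul_right_comm _ (x _)]

theorem ip_stdE (x : Fin (p + q) → ℝ) {i : ℕ} (hi1 : 1 ≤ i) (hi2 : i ≤ p + q) :
    ip p q x (stdE (p + q) i) = (if i ≤ p then 1 else -1) * vent x i := by
  rw [ip_eq_dotProduct, stdE_eq_single hi1 hi2, dotProduct_single, mul_one,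
    ← vent_Jmat_mulVec x hi1]
  simp [vent, show i - 1 < p + q by omega]

theorem ent_rel_of_mem_soSet {X : Matrix (Fin (p + q)) (Fin (p + q)) ℝ} (hX : X ∈ soSet p q)
    {i j : ℕ} (hi1 : 1 ≤ i) (hi2 : i ≤ p + q) (hj1 : 1 ≤ j) (hj2 : j ≤ p + q) :
    (if j ≤ p then 1 else -1) * ent X j i + (if i ≤ p then 1 else -1) * ent X i j = 0 := by
  have h := congrFun (congrFun hX ⟨i - 1, by omega⟩) ⟨j - 1, by omega⟩
  simp only [Matrix.add_apply, Jmat, mul_diagonal, diagonal_mul, transpose_apply,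
    Matrix.zero_apply, show i - 1 < p ↔ i ≤ p by omega, show j - 1 < p ↔ j ≤ p by omega] at h
  simp only [ent, show i - 1 < p + q by omega, show j - 1 < p + q by omega, and_self,
    dite_true]
  linarith

theorem ent_antisymm_of_mem_soSet_of_le {X : Matrix (Fin (p + q)) (Fin (p + q)) ℝ}
    (hX : X ∈ soSet p q) {i j : ℕ} (hi1 : 1 ≤ i) (hi2 : i ≤ p) (hj1 : 1 ≤ j) (hj2 : j ≤ p) :
    ent X i j = -ent X j i := by
  have h := ent_rel_of_mem_soSet hX hi1 (by omega) hj1 (by omega)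
  rw [if_pos hj2, if_pos hi2] at h
  linarith

theorem ent_symm_of_mem_soSet {X : Matrix (Fin (p + q)) (Fin (p + q)) ℝ}
    (hX : X ∈ soSet p q) {i j : ℕ} (hi1 : 1 ≤ i) (hi2 : i ≤ p) (hj1 : p < j) (hj2 : j ≤ p + q) :
    ent X i j = ent X j i := by
  have h := ent_rel_of_mem_soSet hX hi1 (by omega) (by omega) hj2
  rw [if_neg (by omega), if_pos hi2] at h
  linarith

theorem ent_antisymm_of_mem_soSet_of_lt {X : Matrix (Fin (p + q)) (Fin (p + q)) ℝ}
    (hX : X ∈ soSet p q) {i j : ℕ} (hi1 : p < i) (hi2 : i ≤ p + q) (hj1 : p < j)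
    (hj2 : j ≤ p + q) : ent X i j = -ent X j i := by
  have h := ent_rel_of_mem_soSet hX (by omega) hi2 (by omega) hj2
  rw [if_neg (by omega), if_neg (by omega)] at h
  linarith

end Signature

section WSpan

variable {p q : ℕ}

noncomputable def wSpan (p q : ℕ) : Submodule ℝ (Fin (p + q) → ℝ) :=
  Submodule.span ℝ (wVec p q '' Finset.Icc 1 q)

theorem mem_wSpan_iff_exists_sum {v : Fin (p + q) → ℝ} :
    v ∈ wSpan p q ↔ ∃ s : ℕ → ℝ, v = ∑ i ∈ Finset.Icc 1 q, s i • wVec p q i := by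
  rw [wSpan, Submodule.mem_span_image_finset_iff_exists_fun']
  simp only [eq_comm]

theorem vent_wVec (hqp : q ≤ p) {j a : ℕ} (hj1 : 1 ≤ j) (hj2 : j ≤ q) (ha : 1 ≤ a) :
    vent (wVec p q j) a = (if a = p - j + 1 then 1 else 0) - if a = p + j then 1 else 0 := by
  rw [wVec, vent_sub, vent_stdE (by omega) ha, vent_stdE (by omega) ha]

theorem mem_wSpan_of_vent (hqp : q ≤ p) {v : Fin (p + q) → ℝ}
    (hlow : ∀ a, 1 ≤ a → a ≤ p - q → vent v a = 0)
    (hpair : ∀ j, 1 ≤ j → j ≤ q → vent v (p - j + 1) + vent v (p + j) = 0) :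
    v ∈ wSpan p q := by
  refine mem_wSpan_iff_exists_sum.mpr ⟨fun j => vent v (p - j + 1), funext fun a => ?_⟩
  have ha1 : 1 ≤ (a : ℕ) + 1 := Nat.le_add_left 1 _
  rw [← vent_val_add_one v a, Finset.sum_apply, Finset.sum_congr rfl fun j hj => by
    rw [Pi.smul_apply, ← vent_val_add_one (wVec p q j) a, smul_eq_mul,
      vent_wVec hqp (Finset.mem_Icc.mp hj).1 (Finset.mem_Icc.mp hj).2 ha1]]
  rcases le_or_gt ((a : ℕ) + 1) (p - q) with hle | hgt
  · rw [hlow _ ha1 hle, eq_comm]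
    refine Finset.sum_eq_zero fun j hj => ?_
    simp only [Finset.mem_Icc] at hj
    split_ifs <;> first | omega | ring1
  obtain ⟨j₀, hj₀, hcases⟩ : ∃ j₀ ∈ Finset.Icc 1 q,
      (a : ℕ) + 1 = p - j₀ + 1 ∨ (a : ℕ) + 1 = p + j₀ := by
    rcases le_or_gt ((a : ℕ) + 1) p with h | h
    · exact ⟨p - a, Finset.mem_Icc.mpr ⟨by omega, by omega⟩, Or.inl (by omega)⟩
    · exact ⟨a + 1 - p, Finset.mem_Icc.mpr ⟨by omega, by omega⟩, Or.inr (by omega)⟩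
  rw [Finset.sum_eq_single j₀ (fun j hj hne => ?_) (fun h => absurd hj₀ h)]
  · rw [Finset.mem_Icc] at hj₀
    rcases hcases with h | h
    · rw [if_pos h, if_neg (by omega), h]; ring
    · rw [if_neg (by omega), if_pos h, h]; linarith [hpair j₀ hj₀.1 hj₀.2]
  · simp only [Finset.mem_Icc] at hj hj₀
    split_ifs <;> first | omega | ring1

theorem mem_wSpan_iff_vent (hqp : q ≤ p) {v : Fin (p + q) → ℝ} :
    v ∈ wSpan p q ↔ (∀ a, 1 ≤ a → a ≤ p - q → vent v a = 0) ∧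
      ∀ j, 1 ≤ j → j ≤ q → vent v (p - j + 1) + vent v (p + j) = 0 := by
  refine ⟨fun hv => ?_, fun h => mem_wSpan_of_vent hqp h.1 h.2⟩
  induction hv using Submodule.span_induction with
  | mem x hx =>
    obtain ⟨i, hi, rfl⟩ := hx
    simp only [Finset.coe_Icc, Set.mem_Icc] at hi
    refine ⟨fun a ha1 ha2 => ?_, fun j hj1 hj2 => ?_⟩
    · rw [vent_wVec hqp hi.1 hi.2 ha1]
      split_ifs <;> first | omega | ring1
    · rw [vent_wVec hqp hi.1 hi.2 (by omega), vent_wVec hqp hi.1 hi.2 (by omega)]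
      split_ifs <;> first | omega | ring1
  | zero => simp [vent]
  | add x y _ _ hx hy =>
    refine ⟨fun a ha1 ha2 => ?_, fun j hj1 hj2 => ?_⟩
    · rw [vent_add, hx.1 a ha1 ha2, hy.1 a ha1 ha2, add_zero]
    · rw [vent_add, vent_add, add_add_add_comm, hx.2 j hj1 hj2, hy.2 j hj1 hj2, add_zero]
  | smul c x _ hx =>
    refine ⟨fun a ha1 ha2 => ?_, fun j hj1 hj2 => ?_⟩
    · rw [vent_smul, hx.1 a ha1 ha2, mul_zero]
    · rw [vent_smul, vent_smul, ← mul_add, hx.2 j hj1 hj2, mul_zero]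

end WSpan

section Preservation

variable {p q : ℕ} {X : Matrix (Fin (p + q)) (Fin (p + q)) ℝ}

theorem mulVec_stdE_mem_wSpan (hX : X ∈ nSet p q) {k : ℕ} (hk1 : 1 ≤ k) (hk2 : k ≤ p - q) :
    X *ᵥ stdE (p + q) k ∈ wSpan p q := by
  obtain ⟨hso, hA, -, hAB, -, -⟩ := hX
  rw [mem_wSpan_iff_vent (by omega)]
  simp only [vent_mulVec_stdE X hk1 (by omega : k ≤ p + q)]
  refine ⟨fun a ha1 ha2 => hA a k ha1 ha2 hk1 hk2, fun j hj1 hj2 => ?_⟩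
  rw [ent_antisymm_of_mem_soSet_of_le hso (by omega) (by omega) hk1 (by omega),
    hAB k j hk1 hk2 hj1 hj2, ent_symm_of_mem_soSet hso hk1 (by omega) (by omega) (by omega)]
  ring

theorem mulVec_wVec_mem_wSpan (hqp : q ≤ p) (hX : X ∈ nSet p q) {m : ℕ} (hm1 : 1 ≤ m)
    (hm2 : m ≤ q) : X *ᵥ wVec p q m ∈ wSpan p q := by
  obtain ⟨hso, -, hB, hAB, hA', hD⟩ := hX
  have hvent : ∀ a, vent (X *ᵥ wVec p q m) a = ent X a (p + 1 - m) - ent X a (p + m) := by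
    intro a
    rw [wVec, mulVec_sub, vent_sub, vent_mulVec_stdE X (by omega) (by omega),
      vent_mulVec_stdE X (by omega) (by omega), show p - m + 1 = p + 1 - m by omega]
  rw [mem_wSpan_iff_vent hqp]
  simp only [hvent]
  refine ⟨fun a ha1 ha2 => by rw [← hAB a m ha1 ha2 hm1 hm2, Nat.sub_add_comm (by omega),
    sub_self], fun j hj1 hj2 => ?_⟩
  rw [show p - j + 1 = p + 1 - j by omega]
  rcases lt_trichotomy j m with hjm | rfl | hjm
  · rw [ent_antisymm_of_mem_soSet_of_le hso (i := p + 1 - j) (by omega) (by omega) (by omega)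
      (by omega), hA' j m hj1 hjm hm2, ent_symm_of_mem_soSet hso (j := p + j) (by omega)
      (by omega) (by omega) (by omega), hD j m hj1 hjm hm2]
    ring
  · have hdiag_p := ent_antisymm_of_mem_soSet_of_le hso (i := p + 1 - j) (j := p + 1 - j)
      (by omega) (by omega) (by omega) (by omega)
    have hdiag_q := ent_antisymm_of_mem_soSet_of_lt hso (i := p + j) (j := p + j)
      (by omega) (by omega) (by omega) (by omega)
    have hBjj : ent X (p + 1 - j) (p + j) = 0 := by
      rw [← hB j hj1 hj2, Nat.sub_add_comm (by omega)]
    rw [← ent_symm_of_mem_soSet hso (i := p + 1 - j) (j := p + j) (by omega) (by omega)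
      (by omega) (by omega), hBjj]
    linarith
  · rw [hA' m j hm1 hjm hj2, ← ent_symm_of_mem_soSet hso (i := p + 1 - m) (by omega) (by omega)
      (by omega) (by omega), ent_antisymm_of_mem_soSet_of_lt hso (i := p + j) (by omega)
      (by omega) (by omega) (by omega), hD m j hm1 hjm hj2]
    ring

theorem mulVec_mem_wSpan (hqp : q ≤ p) (hX : X ∈ nSet p q) {v : Fin (p + q) → ℝ}
    (hv : v ∈ wSpan p q) : X *ᵥ v ∈ wSpan p q := by
  refine (Submodule.span_le (p := (wSpan p q).comap X.mulVecLin)).mpr ?_ hv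
  rintro _ ⟨m, hm, rfl⟩
  simp only [Finset.coe_Icc, Set.mem_Icc] at hm
  exact mulVec_wVec_mem_wSpan hqp hX hm.1 hm.2

theorem exp_mulVec_sub_stdE_mem_wSpan (hX : X ∈ nSet p q) {k : ℕ} (hk1 : 1 ≤ k)
    (hk2 : k ≤ p - q) {v : Fin (p + q) → ℝ} (hv : v - stdE (p + q) k ∈ wSpan p q) :
    NormedSpace.exp X *ᵥ v - stdE (p + q) k ∈ wSpan p q := by
  have hqp : q ≤ p := by omega
  have hXv : X *ᵥ v ∈ wSpan p q := by
    simpa [← mulVec_add] using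
      add_mem (mulVec_stdE_mem_wSpan hX hk1 hk2) (mulVec_mem_wSpan hqp hX hv)
  simpa using add_mem (exp_mulVec_sub_mem hXv fun w hw => mulVec_mem_wSpan hqp hX hw) hv

end Preservation

theorem Ngrp_mulVec_sub_stdE_mem_wSpan {p q : ℕ} {g : (Matrix (Fin (p + q)) (Fin (p + q)) ℝ)ˣ}
    (hg : g ∈ Ngrp p q) {k : ℕ} (hk1 : 1 ≤ k) (hk2 : k ≤ p - q) {v : Fin (p + q) → ℝ}
    (hv : v - stdE (p + q) k ∈ wSpan p q) :
    (g : Matrix (Fin (p + q)) (Fin (p + q)) ℝ) *ᵥ v - stdE (p + q) k ∈ wSpan p q := by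
  induction hg using Subgroup.closure_induction'' generalizing v with
  | mem _ hX =>
    obtain ⟨X, hX, rfl⟩ := hX
    exact exp_mulVec_sub_stdE_mem_wSpan hX hk1 hk2 hv
  | inv_mem _ hX =>
    obtain ⟨X, hX, rfl⟩ := hX
    exact exp_mulVec_sub_stdE_mem_wSpan ((nSub p q).neg_mem hX) hk1 hk2 hv
  | one => simpa using hv
  | mul g h _ _ hg hh => simpa [← mulVec_mulVec] using hg (hh hv)

section Wedge

variable {p q : ℕ}

/-- `u ∧ v`, the element `x ↦ ⟨v, x⟩ u - ⟨u, x⟩ v` of `𝔰𝔬(p,q)`. -/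
noncomputable def wedge (p q : ℕ) (u v : Fin (p + q) → ℝ) : Matrix (Fin (p + q)) (Fin (p + q)) ℝ :=
  vecMulVec u (Jmat p q *ᵥ v) - vecMulVec v (Jmat p q *ᵥ u)

theorem wedge_mem_soSet (u v : Fin (p + q) → ℝ) : wedge p q u v ∈ soSet p q := by
  ext a b
  simp only [wedge, Matrix.add_apply, Jmat, mul_diagonal, diagonal_mul, transpose_apply,
    Matrix.sub_apply, vecMulVec_apply, mulVec_diagonal, Matrix.zero_apply]
  ring

theorem wedge_mulVec (u v x : Fin (p + q) → ℝ) :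
    wedge p q u v *ᵥ x = ip p q v x • u - ip p q u x • v := by
  simp [wedge, sub_mulVec, vecMulVec_mulVec, ip_eq_dotProduct]

theorem ip_eq_zero_of_mem_wSpan (hqp : q ≤ p) {x y : Fin (p + q) → ℝ} (hx : x ∈ wSpan p q)
    (hy : y ∈ wSpan p q) : ip p q x y = 0 := by
  have hpair := ((mem_wSpan_iff_vent hqp).mp hx).2
  induction hy using Submodule.span_induction with
  | mem y hy =>
    obtain ⟨j, hj, rfl⟩ := hy
    simp only [Finset.coe_Icc, Set.mem_Icc] at hj
    rw [ip_eq_dotProduct, wVec, dotProduct_sub, ← ip_eq_dotProduct, ← ip_eq_dotProduct,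
      ip_stdE x (by omega) (by omega), ip_stdE x (by omega) (by omega), if_pos (by omega),
      if_neg (by omega)]
    linarith [hpair j hj.1 hj.2]
  | zero => simp [ip]
  | add y z _ _ hy hz => rw [ip_eq_dotProduct, dotProduct_add, ← ip_eq_dotProduct,
      ← ip_eq_dotProduct, hy, hz, add_zero]
  | smul c y _ hy => rw [ip_eq_dotProduct, dotProduct_smul, ← ip_eq_dotProduct, hy, smul_zero]

theorem ent_wedge_stdE (w : Fin (p + q) → ℝ) {k a b : ℕ} (hk : k ≤ p) (ha : 1 ≤ a)
    (hb : 1 ≤ b) : ent (wedge p q w (stdE (p + q) k)) a b =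
      vent w a * (if b = k then 1 else 0) -
        (if a = k then 1 else 0) * ((if b ≤ p then 1 else -1) * vent w b) := by
  rw [wedge, ent_sub, ent_vecMulVec, ent_vecMulVec, vent_Jmat_mulVec _ hb,
    vent_Jmat_mulVec _ hb, vent_stdE (by omega) ha, vent_stdE (by omega) hb]
  split_ifs <;> first | omega | ring1

theorem wedge_stdE_mem_nSet {w : Fin (p + q) → ℝ} (hw : w ∈ wSpan p q) {k : ℕ} (hk1 : 1 ≤ k)
    (hk2 : k ≤ p - q) : wedge p q w (stdE (p + q) k) ∈ nSet p q := by
  obtain ⟨hlow, hpair⟩ := (mem_wSpan_iff_vent (by omega)).mp hw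
  refine ⟨wedge_mem_soSet _ _, fun i j hi1 hi2 hj1 hj2 => ?_, fun l hl1 hl2 => ?_,
    fun k' l hk'1 hk'2 hl1 hl2 => ?_, fun i j hi1 hij hj2 => ?_, fun i j hi1 hij hj2 => ?_⟩
  · rw [ent_wedge_stdE w (by omega) hi1 hj1, hlow i hi1 hi2, hlow j hj1 hj2]
    ring
  · rw [ent_wedge_stdE w (by omega) (by omega) (by omega), if_neg (by omega), if_neg (by omega)]
    ring
  all_goals
    rw [ent_wedge_stdE w (by omega) (by omega) (by omega),
      ent_wedge_stdE w (by omega) (by omega) (by omega)]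
    split_ifs <;> first | omega | ring1 | linarith [hpair l hl1 hl2]

theorem exp_wedge_stdE_mulVec_stdE {w : Fin (p + q) → ℝ} (hw : w ∈ wSpan p q) {k : ℕ}
    (hk1 : 1 ≤ k) (hk2 : k ≤ p - q) :
    NormedSpace.exp (wedge p q w (stdE (p + q) k)) *ᵥ stdE (p + q) k = stdE (p + q) k + w := by
  have hqp : q ≤ p := by omega
  have hwk : ip p q w (stdE (p + q) k) = 0 := by
    rw [ip_stdE w hk1 (by omega), ((mem_wSpan_iff_vent hqp).mp hw).1 k hk1 hk2, mul_zero]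
  have hkk : ip p q (stdE (p + q) k) (stdE (p + q) k) = 1 := by
    rw [ip_stdE _ hk1 (by omega), vent_stdE (by omega) hk1, if_pos (by omega), if_pos rfl,
      mul_one]
  have hwedge : wedge p q w (stdE (p + q) k) *ᵥ stdE (p + q) k = w := by
    rw [wedge_mulVec, hkk, hwk, one_smul, zero_smul, sub_zero]
  have hkill : wedge p q w (stdE (p + q) k) *ᵥ w = 0 := by
    rw [wedge_mulVec, ip_comm, hwk, ip_eq_zero_of_mem_wSpan hqp hw hw, zero_smul, zero_smul,
      sub_zero]
  rw [exp_mulVec_of_mulVec_mulVec_eq_zero (by rw [hwedge, hkill]), hwedge]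

end Wedge

theorem Ngrp_orbit_e_general (p q : ℕ)
    (k : ℕ) (hk1 : 1 ≤ k) (hk2 : k ≤ p - q) :
    orb (Ngrp p q) (stdE (p + q) k)
      = {v | ∃ s : ℕ → ℝ,
          v = stdE (p + q) k + ∑ i ∈ Finset.Icc 1 q, s i • wVec p q i} := by
  ext v
  have hcoset : v ∈ {v | ∃ s : ℕ → ℝ,
      v = stdE (p + q) k + ∑ i ∈ Finset.Icc 1 q, s i • wVec p q i} ↔
      v - stdE (p + q) k ∈ wSpan p q := by
    simp only [Set.mem_setOf_eq, mem_wSpan_iff_exists_sum, sub_eq_iff_eq_add']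
  rw [hcoset]
  constructor
  · rintro ⟨g, hg, rfl⟩
    exact Ngrp_mulVec_sub_stdE_mem_wSpan hg hk1 hk2 (by simp)
  · intro hw
    refine ⟨expUnit (wedge p q _ (stdE (p + q) k)),
      Subgroup.subset_closure ⟨_, wedge_stdE_mem_nSet hw hk1 hk2, rfl⟩, ?_⟩
    exact (exp_wedge_stdE_mulVec_stdE hw hk1 hk2).trans (add_sub_cancel _ v)

/-- Assume `p > q`. For every `1 ≤ k ≤ p-q`, the `N`-orbit of `e_k` is
`N(e_k) = {e_k + s_1 w_1 + ⋯ + s_q w_q : s_i ∈ ℝ}`. -/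
theorem Ngrp_orbit_e (p q : ℕ) (hq : 1 ≤ q) (hpq : q < p)
    (k : ℕ) (hk1 : 1 ≤ k) (hk2 : k ≤ p - q) :
    orb (Ngrp p q) (stdE (p + q) k)
      = {v | ∃ s : ℕ → ℝ,
          v = stdE (p + q) k + ∑ i ∈ Finset.Icc 1 q, s i • wVec p q i} :=
  Ngrp_orbit_e_general p q k hk1 hk2
end

section
/- Let r > 0 and H₊ := { v ∈ ℝ^{p+q} : ⟨v,v⟩ = −r² and v^p + v^{p+1} > 0 }. For every x ∈ H₊, the AN-orbit of x equals H₊; in other words, H₊ is a single AN-orbit. -/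
open Matrix

/-!
Write `w = e_p - e_{p+1}` (`wVec p q 1`) and `v = e_p + e_{p+1}` (`vVec p q 1`): both are
isotropic, `⟨v, w⟩ = 2`, and `x^p + x^{p+1} = ⟨x, w⟩`. Every `X ∈ 𝔞 ∪ 𝔫` lies in `𝔰𝔬(p,q)` and
has `w` as an eigenvector, so `exp X` is an isometry multiplying `⟨·, w⟩` by a positive factor;
hence `AN` maps `H₊` into itself.

For transitivity let `a ∧ b` (`wedge p q a b`) be `y ↦ ⟨b, y⟩ a - ⟨a, y⟩ b`. Then `v ∧ w ∈ 𝔞`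
acts by `2` on `v` and by `-2` on `w`, while for `u ⊥ v, w` the null rotation `u ∧ w` lies in
`𝔫` and has cube zero. Given `y ∈ H₊`, some `exp (t v ∧ w)` moves the base point `r e_{p+1}` to
the point of `span {v, w} ∩ H₊` with the same `⟨·, w⟩` as `y`, and `exp (u ∧ w)`, with `u` the
component of `y` orthogonal to `v, w` divided by `⟨y, w⟩`, carries that point to `y`.
-/

namespace IwasawaAN

open NormedSpace

section MatrixExp

variable {n : ℕ}

open scoped Norms.Operator in
theorem hasSum_exp_mulVec (M : Matrix (Fin n) (Fin n) ℝ) (v : Fin n → ℝ) :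
    HasSum (fun k => (k.factorial : ℝ)⁻¹ • (M ^ k *ᵥ v)) (exp M *ᵥ v) := by
  convert (exp_series_hasSum_exp' (𝕂 := ℝ) M).map
    (AddMonoidHom.mk' (· *ᵥ v) fun A B => add_mulVec A B v)
    (continuous_id.matrix_mulVec continuous_const) using 1
  · ext k : 1
    simp [smul_mulVec]
  · rfl

theorem exp_mulVec_eq_sum_of_pow_mulVec_eq_zero (M : Matrix (Fin n) (Fin n) ℝ)
    (v : Fin n → ℝ) {m : ℕ} (hm : M ^ m *ᵥ v = 0) :
    exp M *ᵥ v = ∑ k ∈ Finset.range m, (k.factorial : ℝ)⁻¹ • (M ^ k *ᵥ v) := by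
  refine (hasSum_exp_mulVec M v).unique (hasSum_sum_of_ne_finset_zero fun k hk => ?_)
  obtain ⟨j, rfl⟩ := Nat.exists_eq_add_of_le (not_lt.mp (Finset.mem_range.not.mp hk))
  rw [add_comm, pow_add, ← mulVec_mulVec, hm, mulVec_zero, smul_zero]

theorem exp_mulVec_of_mulVec_eq_smul (M : Matrix (Fin n) (Fin n) ℝ) {v : Fin n → ℝ}
    {c : ℝ} (hv : M *ᵥ v = c • v) : exp M *ᵥ v = Real.exp c • v := by
  have hpow (k : ℕ) : M ^ k *ᵥ v = c ^ k • v := by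
    induction k with
    | zero => simp
    | succ k ih => rw [pow_succ', ← mulVec_mulVec, ih, mulVec_smul, hv, smul_smul, pow_succ]
  refine (hasSum_exp_mulVec M v).unique ?_
  simpa [hpow, smul_smul, Real.exp_eq_exp_ℝ] using
    (exp_series_hasSum_exp' (𝕂 := ℝ) c).smul_const v

end MatrixExp

section Form

variable {p q : ℕ}

theorem ip_eq_dotProduct (x y : Fin (p + q) → ℝ) : ip p q x y = (Jmat p q *ᵥ x) ⬝ᵥ y := by
  simp [ip, Jmat, mulVec_diagonal, dotProduct]

theorem ip_comm (x y : Fin (p + q) → ℝ) : ip p q x y = ip p q y x :=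
  Finset.sum_congr rfl fun _ _ => by ring

theorem ip_add_left (x y z : Fin (p + q) → ℝ) : ip p q (x + y) z = ip p q x z + ip p q y z := by
  simp only [ip_eq_dotProduct, mulVec_add, add_dotProduct]

theorem ip_smul_left (c : ℝ) (x y : Fin (p + q) → ℝ) : ip p q (c • x) y = c * ip p q x y := by
  simp only [ip_eq_dotProduct, mulVec_smul, smul_dotProduct, smul_eq_mul]

theorem ip_add_right (x y z : Fin (p + q) → ℝ) : ip p q x (y + z) = ip p q x y + ip p q x z := by
  simp only [ip_eq_dotProduct, dotProduct_add]

theorem ip_sub_right (x y z : Fin (p + q) → ℝ) : ip p q x (y - z) = ip p q x y - ip p q x z := by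
  simp only [ip_eq_dotProduct, dotProduct_sub]

theorem ip_smul_right (c : ℝ) (x y : Fin (p + q) → ℝ) : ip p q x (c • y) = c * ip p q x y := by
  simp only [ip_eq_dotProduct, dotProduct_smul, smul_eq_mul]

theorem vecMul_Jmat (x : Fin (p + q) → ℝ) : x ᵥ* Jmat p q = Jmat p q *ᵥ x := by
  ext i
  simp [Jmat, vecMul_diagonal, mulVec_diagonal, mul_comm]

theorem ip_mulVec_mulVec {g : Matrix (Fin (p + q)) (Fin (p + q)) ℝ}
    (hg : gᵀ * Jmat p q * g = Jmat p q) (x y : Fin (p + q) → ℝ) :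
    ip p q (g *ᵥ x) (g *ᵥ y) = ip p q x y := by
  rw [ip_eq_dotProduct, ip_eq_dotProduct, dotProduct_mulVec, ← mulVec_transpose, mulVec_mulVec,
    mulVec_mulVec, hg]

open scoped Norms.Operator in
theorem transpose_exp_mul_Jmat_mul_exp {X : Matrix (Fin (p + q)) (Fin (p + q)) ℝ}
    (hX : X ∈ soSet p q) : (exp X)ᵀ * Jmat p q * exp X = Jmat p q := by
  have h : SemiconjBy (Jmat p q) X (-Xᵀ) := by
    rw [SemiconjBy, neg_mul, eq_neg_iff_add_eq_zero]
    exact (add_comm _ _).trans hX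
  rw [← Matrix.exp_transpose, ← neg_neg Xᵀ]
  exact h.exp_neg_mul_mul_exp_eq_self

def wedge (p q : ℕ) (a b : Fin (p + q) → ℝ) : Matrix (Fin (p + q)) (Fin (p + q)) ℝ :=
  vecMulVec a (Jmat p q *ᵥ b) - vecMulVec b (Jmat p q *ᵥ a)

theorem wedge_mulVec (a b y : Fin (p + q) → ℝ) :
    wedge p q a b *ᵥ y = ip p q b y • a - ip p q a y • b := by
  simp [wedge, sub_mulVec, vecMulVec_mulVec, ip_eq_dotProduct]

theorem wedge_mem_soSet (a b : Fin (p + q) → ℝ) : wedge p q a b ∈ soSet p q := by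
  simp only [soSet, Set.mem_ofPred_eq, wedge, transpose_sub, transpose_vecMulVec, sub_mul,
    mul_sub, vecMulVec_mul, mul_vecMulVec, vecMul_Jmat]
  abel

theorem exp_wedge_mulVec {a b : Fin (p + q) → ℝ} (hbb : ip p q b b = 0) (hab : ip p q a b = 0)
    (y : Fin (p + q) → ℝ) :
    exp (wedge p q a b) *ᵥ y
      = y + ip p q b y • a - (ip p q a y + ip p q b y * ip p q a a / 2) • b := by
  have hba : ip p q b a = 0 := by rw [ip_comm, hab]
  have ha : wedge p q a b *ᵥ a = -ip p q a a • b := by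
    rw [wedge_mulVec, hba, zero_smul, zero_sub, neg_smul]
  have hb : wedge p q a b *ᵥ b = 0 := by
    rw [wedge_mulVec, hbb, hab, zero_smul, zero_smul, sub_zero]
  have h₂ : wedge p q a b ^ 2 *ᵥ y = -(ip p q b y * ip p q a a) • b := by
    rw [sq, ← mulVec_mulVec, wedge_mulVec a b y, mulVec_sub, mulVec_smul, mulVec_smul, ha, hb]
    module
  have h₃ : wedge p q a b ^ 3 *ᵥ y = 0 := by
    rw [pow_succ', ← mulVec_mulVec, h₂, mulVec_smul, hb, smul_zero]
  rw [exp_mulVec_eq_sum_of_pow_mulVec_eq_zero _ _ h₃, Finset.sum_range_succ, Finset.sum_range_succ,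
    Finset.sum_range_one, h₂, pow_zero, pow_one, one_mulVec, wedge_mulVec]
  simp only [Nat.factorial, Nat.cast_one, inv_one, one_smul]
  module

end Form

section Coordinates

variable {n : ℕ}

theorem vent_add (x y : Fin n → ℝ) (i : ℕ) : vent (x + y) i = vent x i + vent y i := by
  unfold vent; split <;> simp

theorem vent_sub (x y : Fin n → ℝ) (i : ℕ) : vent (x - y) i = vent x i - vent y i := by
  unfold vent; split <;> simp

theorem vent_smul (c : ℝ) (x : Fin n → ℝ) (i : ℕ) : vent (c • x) i = c * vent x i := by
  unfold vent; split <;> simp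

theorem ent_val_add_one (X : Matrix (Fin n) (Fin n) ℝ) (a b : Fin n) :
    ent X (a + 1) (b + 1) = X a b := by
  simp [ent]

theorem eq_of_vent_eq {x y : Fin n → ℝ} (h : ∀ i, 1 ≤ i → i ≤ n → vent x i = vent y i) :
    x = y := by
  ext k
  simpa [vent] using h (k + 1) (by omega) k.isLt

theorem ent_sub (X Y : Matrix (Fin n) (Fin n) ℝ) (i j : ℕ) :
    ent (X - Y) i j = ent X i j - ent Y i j := by
  unfold ent; split <;> simp

theorem ent_vecMulVec (a b : Fin n → ℝ) (i j : ℕ) :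
    ent (vecMulVec a b) i j = vent a i * vent b j := by
  unfold ent vent
  split_ifs <;> simp_all [vecMulVec_apply]

-- `vent x 0` reads the coordinate `x 0` (the index `0 - 1` truncates), whence `1 ≤ j`.
theorem vent_stdE {i j : ℕ} (hj : 1 ≤ j) (hi : i ≤ n) :
    vent (stdE n i) j = if j = i then 1 else 0 := by
  unfold vent stdE
  split_ifs <;> simp_all
  omega

theorem stdE_eq_single {i : ℕ} (hi : 1 ≤ i) (hin : i ≤ n) :
    stdE n i = Pi.single ⟨i - 1, by omega⟩ 1 := by
  ext j
  simp only [stdE, Pi.single_apply, Fin.ext_iff]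
  congr 1
  simp only [eq_iff_iff]
  omega

theorem vent_mulVec_stdE (X : Matrix (Fin n) (Fin n) ℝ) {i : ℕ} (hi : 1 ≤ i) (hin : i ≤ n)
    (k : ℕ) : vent (X *ᵥ stdE n i) k = ent X k i := by
  rw [stdE_eq_single hi hin, mulVec_single_one]
  unfold vent ent
  split_ifs <;> simp_all
  omega

theorem vent_mulVec_Jmat {p q : ℕ} (x : Fin (p + q) → ℝ) {j : ℕ} (hj : 1 ≤ j) :
    vent (Jmat p q *ᵥ x) j = (if j ≤ p then 1 else -1) * vent x j := by
  unfold vent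
  split_ifs <;> simp_all [Jmat, mulVec_diagonal] <;> omega

theorem ip_stdE {p q : ℕ} (y : Fin (p + q) → ℝ) {i : ℕ} (hi : 1 ≤ i) :
    ip p q y (stdE (p + q) i) = (if i ≤ p then 1 else -1) * vent y i := by
  rcases le_or_gt i (p + q) with hin | hin
  · rw [stdE_eq_single hi hin, ip, vent, dif_pos (by omega)]
    simp [Pi.single_apply, show i - 1 < p ↔ i ≤ p by omega]
  · have h0 : stdE (p + q) i = 0 := by
      ext j; exact if_neg (by omega)
    simp [h0, ip, vent]
    omega

end Coordinates

section NullVectors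

variable {p q : ℕ}

theorem vent_wVec_one (hp : 1 ≤ p) (hq : 1 ≤ q) {j : ℕ} (hj : 1 ≤ j) :
    vent (wVec p q 1) j = (if j = p then 1 else 0) - (if j = p + 1 then 1 else 0) := by
  rw [wVec, vent_sub, Nat.sub_add_cancel hp, vent_stdE hj (by omega), vent_stdE hj (by omega)]

theorem vent_vVec_one (hp : 1 ≤ p) (hq : 1 ≤ q) {j : ℕ} (hj : 1 ≤ j) :
    vent (vVec p q 1) j = (if j = p then 1 else 0) + (if j = p + 1 then 1 else 0) := by
  rw [vVec, vent_add, Nat.sub_add_cancel hp, vent_stdE hj (by omega), vent_stdE hj (by omega)]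

theorem ip_wVec_one (hp : 1 ≤ p) (y : Fin (p + q) → ℝ) :
    ip p q y (wVec p q 1) = vent y p + vent y (p + 1) := by
  rw [wVec, ip_sub_right, Nat.sub_add_cancel hp, ip_stdE y hp, ip_stdE y (by omega)]
  simp

theorem ip_vVec_one (hp : 1 ≤ p) (y : Fin (p + q) → ℝ) :
    ip p q y (vVec p q 1) = vent y p - vent y (p + 1) := by
  rw [vVec, ip_add_right, Nat.sub_add_cancel hp, ip_stdE y hp, ip_stdE y (by omega)]
  simp
  ring

variable (hp : 1 ≤ p) (hq : 1 ≤ q)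
include hp hq

theorem ip_wVec_one_wVec_one : ip p q (wVec p q 1) (wVec p q 1) = 0 := by
  simp [ip_wVec_one hp, vent_wVec_one hp hq, hp]

theorem ip_vVec_one_vVec_one : ip p q (vVec p q 1) (vVec p q 1) = 0 := by
  simp [ip_vVec_one hp, vent_vVec_one hp hq, hp]

theorem ip_vVec_one_wVec_one : ip p q (vVec p q 1) (wVec p q 1) = 2 := by
  simp [ip_wVec_one hp, vent_vVec_one hp hq, hp]
  norm_num

theorem ip_wVec_one_vVec_one : ip p q (wVec p q 1) (vVec p q 1) = 2 := by
  rw [ip_comm, ip_vVec_one_wVec_one hp hq]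

theorem vent_mulVec_wVec_one (X : Matrix (Fin (p + q)) (Fin (p + q)) ℝ) (k : ℕ) :
    vent (X *ᵥ wVec p q 1) k = ent X k p - ent X k (p + 1) := by
  rw [wVec, mulVec_sub, vent_sub, Nat.sub_add_cancel hp, vent_mulVec_stdE X hp (by omega),
    vent_mulVec_stdE X (by omega) (by omega)]

end NullVectors

section Entries

variable {p q : ℕ}

theorem mem_soSet_iff_ent (X : Matrix (Fin (p + q)) (Fin (p + q)) ℝ) :
    X ∈ soSet p q ↔ ∀ i j, 1 ≤ i → i ≤ p + q → 1 ≤ j → j ≤ p + q →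
      (if j ≤ p then 1 else -1) * ent X j i + (if i ≤ p then 1 else -1) * ent X i j = 0 := by
  simp only [soSet, Set.mem_ofPred_eq, ← Matrix.ext_iff, Matrix.add_apply, Matrix.zero_apply, Jmat,
    mul_diagonal, diagonal_mul, transpose_apply]
  constructor
  · intro h i j hi hi' hj hj'
    have := h ⟨i - 1, by omega⟩ ⟨j - 1, by omega⟩
    unfold ent
    rw [dif_pos (by omega), dif_pos (by omega)]
    simp only [show i - 1 < p ↔ i ≤ p by omega, show j - 1 < p ↔ j ≤ p by omega] at this
    linarith
  · intro h a b
    have := h (a + 1) (b + 1) (by omega) (by omega) (by omega) (by omega)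
    simp only [ent_val_add_one, Nat.add_one_le_iff] at this
    linarith

theorem ent_wedge (a b : Fin (p + q) → ℝ) (i : ℕ) {j : ℕ} (hj : 1 ≤ j) :
    ent (wedge p q a b) i j
      = (if j ≤ p then 1 else -1) * (vent a i * vent b j - vent b i * vent a j) := by
  rw [wedge, ent_sub, ent_vecMulVec, ent_vecMulVec, vent_mulVec_Jmat _ hj, vent_mulVec_Jmat _ hj]
  ring

theorem aSet_subset_soSet (hpq : q ≤ p) : aSet p q ⊆ soSet p q := by
  rintro X ⟨hsym, hzero⟩
  rw [mem_soSet_iff_ent]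
  intro i j hi hi' hj hj'
  by_cases h : ∃ l, 1 ≤ l ∧ l ≤ q ∧ ((i = p - l + 1 ∧ j = p + l) ∨ (i = p + l ∧ j = p - l + 1))
  · obtain ⟨l, hl, hl', ⟨rfl, rfl⟩ | ⟨rfl, rfl⟩⟩ := h
    all_goals
      rw [hsym l hl hl', if_pos (by omega : p - l + 1 ≤ p), if_neg (by omega : ¬ p + l ≤ p)]
      ring
  · have h' : ¬ ∃ l, 1 ≤ l ∧ l ≤ q ∧
        ((j = p - l + 1 ∧ i = p + l) ∨ (j = p + l ∧ i = p - l + 1)) := by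
      rintro ⟨l, hl, hl', hc⟩
      exact h ⟨l, hl, hl', hc.symm.imp And.symm And.symm⟩
    rw [hzero i j hi hi' hj hj' h, hzero j i hj hj' hi hi' h']
    ring

end Entries

section ActionOnW

variable {p q : ℕ}

theorem mulVec_wVec_one_of_mem_aSet (hq : 1 ≤ q) (hpq : q ≤ p) {X : Matrix (Fin (p + q)) (Fin (p + q)) ℝ}
    (hX : X ∈ aSet p q) : X *ᵥ wVec p q 1 = (-ent X p (p + 1)) • wVec p q 1 := by
  have hp : 1 ≤ p := hq.trans hpq
  obtain ⟨hsym, hzero⟩ := hX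
  have hsym₁ : ent X p (p + 1) = ent X (p + 1) p := by
    simpa [Nat.sub_add_cancel hp] using hsym 1 le_rfl hq
  refine eq_of_vent_eq fun k hk hk' => ?_
  rw [vent_mulVec_wVec_one hp hq, vent_smul, vent_wVec_one hp hq hk]
  have hzero' : ∀ j, j = p ∨ j = p + 1 → ¬ (k = p ∧ j = p + 1) → ¬ (k = p + 1 ∧ j = p) →
      ent X k j = 0 := fun j hj h₁ h₂ =>
    hzero k j hk hk' (by omega) (by omega) (by rintro ⟨l, -, -, h | h⟩ <;> omega)
  rcases eq_or_ne k p with rfl | h₁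
  · rw [hzero' k (.inl rfl) (by omega) (by omega)]
    simp
  rcases eq_or_ne k (p + 1) with rfl | h₂
  · rw [hzero' (p + 1) (.inr rfl) (by omega) (by omega), ← hsym₁]
    simp
  rw [hzero' p (.inl rfl) (by omega) (by omega), hzero' (p + 1) (.inr rfl) (by omega) (by omega)]
  simp [h₁, h₂]

theorem mulVec_wVec_one_of_mem_nSet (hp : 1 ≤ p) (hq : 1 ≤ q) {X : Matrix (Fin (p + q)) (Fin (p + q)) ℝ}
    (hX : X ∈ nSet p q) : X *ᵥ wVec p q 1 = 0 := by
  obtain ⟨hso, -, hc2, hc3, hc4, hc5⟩ := hX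
  have hso' := (mem_soSet_iff_ent X).1 hso
  have hc2' : ent X p (p + 1) = 0 := by simpa [Nat.sub_add_cancel hp] using hc2 1 le_rfl hq
  refine eq_of_vent_eq fun k hk hk' => ?_
  rw [vent_mulVec_wVec_one hp hq, show vent (0 : Fin (p + q) → ℝ) k = 0 by simp [vent]]
  rcases lt_trichotomy k p with hkp | rfl | hkp
  · rcases le_or_gt k (p - q) with hkq | hkq
    · simpa [Nat.sub_add_cancel hp, sub_eq_zero] using hc3 k 1 hk hkq le_rfl hq
    · have := hc4 1 (p + 1 - k) le_rfl (by omega) (by omega)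
      rw [show p + 1 - (p + 1 - k) = k by omega, Nat.add_sub_cancel] at this
      rw [this, sub_self]
  · have := hso' k k hk hk' hk hk'
    simp only [le_refl, if_true] at this
    linarith
  rcases eq_or_lt_of_le (Nat.succ_le_of_lt hkp) with rfl | hkp'
  · have h₁ := hso' (p + 1) (p + 1) hk hk' hk hk'
    have h₂ := hso' p (p + 1) hp (by omega) hk hk'
    simp only [show ¬ p + 1 ≤ p by omega, le_refl, if_true, if_false] at h₁ h₂
    linarith
  · have h₁ := hso' k p hk hk' hp (by omega)
    have h₂ := hso' k (p + 1) hk hk' (by omega) (by omega)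
    have h₃ := hc5 1 (k - p) le_rfl (by omega) (by omega)
    rw [show p + (k - p) = k by omega, Nat.add_sub_cancel] at h₃
    simp only [show ¬ k ≤ p by omega, show ¬ p + 1 ≤ p by omega, le_refl, if_true,
      if_false] at h₁ h₂
    linarith

end ActionOnW

section Generators

variable {p q : ℕ} (hq : 1 ≤ q) (hpq : q ≤ p)
include hq hpq

theorem wedge_mem_nSet {u : Fin (p + q) → ℝ} (hu : vent u p = 0) (hu' : vent u (p + 1) = 0) :
    wedge p q u (wVec p q 1) ∈ nSet p q := by
  have hp : 1 ≤ p := hq.trans hpq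
  have hW := fun {j : ℕ} (hj : 1 ≤ j) => vent_wVec_one hp hq hj
  refine ⟨wedge_mem_soSet _ _, ?_, ?_, ?_, ?_, ?_⟩
  · intro i j hi _ hj _
    rw [ent_wedge _ _ _ hj, hW hi, hW hj]
    split_ifs <;> first | ring1 | omega
  · intro l hl _
    rw [ent_wedge _ _ _ (by omega)]
    obtain rfl | hl1 := eq_or_ne l 1
    · rw [Nat.sub_add_cancel hp, hu, hu']
      ring
    · rw [hW (by omega), hW (by omega)]
      simp only [show p + l ≠ p by omega, show p + l ≠ p + 1 by omega,
        show p - l + 1 ≠ p by omega, show p - l + 1 ≠ p + 1 by omega, if_false]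
      ring
  all_goals
    intros
    rw [ent_wedge _ _ _ (by omega), ent_wedge _ _ _ (by omega), hW (by omega), hW (by omega),
      hW (by omega)]
    simp only [add_le_iff_nonpos_right, nonpos_iff_eq_zero, add_eq_left, add_right_inj]
    split_ifs <;> first | ring1 | omega

theorem smul_wedge_mem_aSet (t : ℝ) : t • wedge p q (vVec p q 1) (wVec p q 1) ∈ aSet p q := by
  have hp : 1 ≤ p := hq.trans hpq
  have hV := fun {j : ℕ} (hj : 1 ≤ j) => vent_vVec_one hp hq hj
  have hW := fun {j : ℕ} (hj : 1 ≤ j) => vent_wVec_one hp hq hj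
  refine ⟨fun l hl _ => ?_, fun i j hi _ hj _ hne => ?_⟩
  · rw [ent_smul, ent_smul, ent_wedge _ _ _ (by omega), ent_wedge _ _ _ (by omega),
      hV (by omega), hW (by omega), hV (by omega), hW (by omega)]
    simp only [add_le_iff_nonpos_right, nonpos_iff_eq_zero, add_eq_left, add_right_inj]
    split_ifs <;> first | ring1 | omega
  · have h₁ : ¬ (i = p ∧ j = p + 1) := fun h => hne ⟨1, le_rfl, hq, .inl (by omega)⟩
    have h₂ : ¬ (i = p + 1 ∧ j = p) := fun h => hne ⟨1, le_rfl, hq, .inr (by omega)⟩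
    rw [ent_smul, ent_wedge _ _ _ hj, hV hi, hW hj, hV hj, hW hi]
    split_ifs <;> first | ring1 | omega

end Generators

noncomputable def orthVW (p q : ℕ) (y : Fin (p + q) → ℝ) : Fin (p + q) → ℝ :=
  y - (ip p q y (wVec p q 1) / 2) • vVec p q 1 - (ip p q y (vVec p q 1) / 2) • wVec p q 1

theorem orthVW_add {p q : ℕ} (y : Fin (p + q) → ℝ) :
    orthVW p q y + (ip p q y (wVec p q 1) / 2) • vVec p q 1
      + (ip p q y (vVec p q 1) / 2) • wVec p q 1 = y := by
  rw [orthVW]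
  abel

section Orthogonal

variable {p q : ℕ} (hp : 1 ≤ p) (hq : 1 ≤ q)
include hp hq

theorem vent_orthVW (y : Fin (p + q) → ℝ) : vent (orthVW p q y) p = 0 := by
  simp [orthVW, vent_sub, vent_smul, vent_vVec_one hp hq hp, vent_wVec_one hp hq hp,
    ip_wVec_one hp, ip_vVec_one hp]
  ring

theorem vent_orthVW_succ (y : Fin (p + q) → ℝ) : vent (orthVW p q y) (p + 1) = 0 := by
  simp [orthVW, vent_sub, vent_smul, vent_vVec_one hp hq, vent_wVec_one hp hq,
    ip_wVec_one hp, ip_vVec_one hp]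
  ring

theorem ip_orthVW_orthVW (y : Fin (p + q) → ℝ) :
    ip p q (orthVW p q y) (orthVW p q y)
      = ip p q y y - ip p q y (wVec p q 1) * ip p q y (vVec p q 1) := by
  have hW : ip p q (orthVW p q y) (wVec p q 1) = 0 := by
    rw [ip_wVec_one hp, vent_orthVW hp hq, vent_orthVW_succ hp hq, add_zero]
  have hV : ip p q (orthVW p q y) (vVec p q 1) = 0 := by
    rw [ip_vVec_one hp, vent_orthVW hp hq, vent_orthVW_succ hp hq, sub_zero]
  conv_rhs => rw [← orthVW_add y]
  simp only [ip_add_left, ip_add_right, ip_smul_left, ip_smul_right, hW, hV,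
    ip_comm _ (orthVW p q y), ip_vVec_one_vVec_one hp hq, ip_wVec_one_wVec_one hp hq,
    ip_vVec_one_wVec_one hp hq, ip_wVec_one_vVec_one hp hq]
  ring

end Orthogonal

section Orbits

variable {n : ℕ}

theorem orb_eq_of_mapsTo_of_subset_orb {G : Subgroup (Matrix (Fin n) (Fin n) ℝ)ˣ}
    {S : Set (Fin n → ℝ)} {x₀ x : Fin n → ℝ}
    (hmaps : ∀ g ∈ G, Set.MapsTo ((g : Matrix (Fin n) (Fin n) ℝ) *ᵥ ·) S S)
    (hS : S ⊆ orb G x₀) (hx : x ∈ S) : orb G x = S := by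
  obtain ⟨g₀, hg₀, rfl⟩ := hS hx
  refine Set.Subset.antisymm (fun _ ⟨g, hg, hv⟩ => hv ▸ hmaps g hg hx) fun v hv => ?_
  obtain ⟨g, hg, rfl⟩ := hS hv
  refine ⟨g * g₀⁻¹, G.mul_mem hg (G.inv_mem hg₀), ?_⟩
  rw [mulVec_mulVec, Units.val_mul, Matrix.mul_assoc, Units.inv_mul, Matrix.mul_one]

end Orbits

def hyperboloidSheet (p q : ℕ) (r : ℝ) : Set (Fin (p + q) → ℝ) :=
  {v | ip p q v v = -r ^ 2 ∧ 0 < vent v p + vent v (p + 1)}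

theorem smul_stdE_eq {p q : ℕ} (r : ℝ) :
    r • stdE (p + q) (p + 1) = (r / 2) • vVec p q 1 + (-(r / 2)) • wVec p q 1 := by
  rw [vVec, wVec]
  module

theorem expUnit_mem_ANgrp {p q : ℕ} {X : Matrix (Fin (p + q)) (Fin (p + q)) ℝ}
    (hX : X ∈ aSet p q ∪ nSet p q) : expUnit X ∈ ANgrp p q :=
  Subgroup.subset_closure ⟨X, hX, rfl⟩

section ANAction

variable {p q : ℕ} (hq : 1 ≤ q) (hpq : q ≤ p)
include hq hpq

theorem mapsTo_exp_hyperboloidSheet {X : Matrix (Fin (p + q)) (Fin (p + q)) ℝ}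
    (hX : X ∈ aSet p q ∪ nSet p q) (r : ℝ) :
    Set.MapsTo (exp X *ᵥ ·) (hyperboloidSheet p q r) (hyperboloidSheet p q r) := by
  have hp : 1 ≤ p := hq.trans hpq
  obtain ⟨hso, c, hc⟩ : X ∈ soSet p q ∧ ∃ c : ℝ, X *ᵥ wVec p q 1 = c • wVec p q 1 := by
    rcases hX with hX | hX
    · exact ⟨aSet_subset_soSet hpq hX, _, mulVec_wVec_one_of_mem_aSet hq hpq hX⟩
    · exact ⟨hX.1, 0, by rw [mulVec_wVec_one_of_mem_nSet hp hq hX, zero_smul]⟩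
  have hJ := transpose_exp_mul_Jmat_mul_exp hso
  have hW : wVec p q 1 = Real.exp (-c) • (exp X *ᵥ wVec p q 1) := by
    rw [exp_mulVec_of_mulVec_eq_smul X hc, smul_smul, ← Real.exp_add, neg_add_cancel,
      Real.exp_zero, one_smul]
  rintro v ⟨hv, hvW⟩
  refine ⟨(ip_mulVec_mulVec hJ v v).trans hv, ?_⟩
  rw [← ip_wVec_one hp] at hvW ⊢
  rw [hW, ip_smul_right, ip_mulVec_mulVec hJ]
  positivity

theorem mapsTo_hyperboloidSheet_of_mem_ANgrp (r : ℝ) :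
    ∀ g ∈ ANgrp p q, Set.MapsTo ((g : Matrix (Fin (p + q)) (Fin (p + q)) ℝ) *ᵥ ·)
      (hyperboloidSheet p q r) (hyperboloidSheet p q r) := by
  intro g hg
  induction hg using Subgroup.closure_induction'' with
  | mem _ hX =>
    obtain ⟨X, hX, rfl⟩ := hX
    exact mapsTo_exp_hyperboloidSheet hq hpq hX r
  | inv_mem _ hX =>
    obtain ⟨X, hX, rfl⟩ := hX
    refine mapsTo_exp_hyperboloidSheet hq hpq (X := -X) ?_ r
    rcases hX with hX | hX
    · exact .inl ((aSub p q).neg_mem hX)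
    · exact .inr ((nSub p q).neg_mem hX)
  | one => exact fun v hv => by simpa using hv
  | mul g h _ _ hg hh =>
    simpa [Function.comp_def, mulVec_mulVec] using hg.comp hh

theorem exp_smul_wedge_mulVec (t α β : ℝ) :
    exp (t • wedge p q (vVec p q 1) (wVec p q 1)) *ᵥ (α • vVec p q 1 + β • wVec p q 1)
      = (Real.exp (2 * t) * α) • vVec p q 1 + (Real.exp (-(2 * t)) * β) • wVec p q 1 := by
  have hp : 1 ≤ p := hq.trans hpq
  have hV : (t • wedge p q (vVec p q 1) (wVec p q 1)) *ᵥ vVec p q 1 = (2 * t) • vVec p q 1 := by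
    rw [smul_mulVec, wedge_mulVec, ip_wVec_one_vVec_one hp hq, ip_vVec_one_vVec_one hp hq]
    module
  have hW : (t • wedge p q (vVec p q 1) (wVec p q 1)) *ᵥ wVec p q 1 = (-(2 * t)) • wVec p q 1 := by
    rw [smul_mulVec, wedge_mulVec, ip_wVec_one_wVec_one hp hq, ip_vVec_one_wVec_one hp hq]
    module
  rw [mulVec_add, mulVec_smul, mulVec_smul, exp_mulVec_of_mulVec_eq_smul _ hV,
    exp_mulVec_of_mulVec_eq_smul _ hW, smul_smul, smul_smul, mul_comm α, mul_comm β]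

theorem exists_mem_ANgrp_mulVec_eq (y : Fin (p + q) → ℝ) (hy : ip p q y (wVec p q 1) ≠ 0) :
    ∃ g ∈ ANgrp p q, (g : Matrix (Fin (p + q)) (Fin (p + q)) ℝ) *ᵥ
      ((ip p q y (wVec p q 1) / 2) • vVec p q 1
        + (ip p q y y / (2 * ip p q y (wVec p q 1))) • wVec p q 1) = y := by
  have hp : 1 ≤ p := hq.trans hpq
  set u := (ip p q y (wVec p q 1))⁻¹ • orthVW p q y
  have hu : vent u p = 0 := by rw [vent_smul, vent_orthVW hp hq, mul_zero]
  have hu₁ : vent u (p + 1) = 0 := by rw [vent_smul, vent_orthVW_succ hp hq, mul_zero]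
  have huW : ip p q u (wVec p q 1) = 0 := by rw [ip_wVec_one hp, hu, hu₁, add_zero]
  have huV : ip p q u (vVec p q 1) = 0 := by rw [ip_vVec_one hp, hu, hu₁, sub_zero]
  refine ⟨expUnit _, expUnit_mem_ANgrp (.inr (wedge_mem_nSet hq hpq hu hu₁)), ?_⟩
  change exp (wedge p q u (wVec p q 1)) *ᵥ _ = y
  rw [exp_wedge_mulVec (ip_wVec_one_wVec_one hp hq) huW]
  simp only [ip_add_right, ip_smul_right, ip_wVec_one_vVec_one hp hq, ip_wVec_one_wVec_one hp hq,
    huV, huW, u, ip_smul_left, ip_orthVW_orthVW hp hq]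
  conv_rhs => rw [← orthVW_add y]
  match_scalars <;> field_simp <;> ring

theorem hyperboloidSheet_subset_orb {r : ℝ} (hr : 0 < r) :
    hyperboloidSheet p q r ⊆ orb (ANgrp p q) (r • stdE (p + q) (p + 1)) := by
  have hp : 1 ≤ p := hq.trans hpq
  rintro v ⟨hv, hvW⟩
  rw [← ip_wVec_one hp] at hvW
  obtain ⟨n, hn, hnv⟩ := exists_mem_ANgrp_mulVec_eq hq hpq v hvW.ne'
  set t := Real.log (ip p q v (wVec p q 1) / r) / 2
  have ha := expUnit_mem_ANgrp (.inl (smul_wedge_mem_aSet hq hpq t))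
  refine ⟨n * expUnit _, (ANgrp p q).mul_mem hn ha, ?_⟩
  have h2t : Real.exp (2 * t) = ip p q v (wVec p q 1) / r := by
    rw [mul_div_cancel₀ _ two_ne_zero, Real.exp_log (div_pos hvW hr)]
  rw [Units.val_mul, ← mulVec_mulVec, smul_stdE_eq]
  change _ *ᵥ (exp _ *ᵥ _) = v
  rw [exp_smul_wedge_mulVec hq hpq, Real.exp_neg, h2t]
  rw [hv] at hnv
  convert hnv using 4 <;> field_simp

end ANAction

end IwasawaAN

/-- For `r > 0`, `H₊ := {v : ⟨v,v⟩ = -r², v^p + v^{p+1} > 0}` is a single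
`AN`-orbit: for every `x ∈ H₊`, `AN(x) = H₊`. -/
theorem ANgrp_orbit_hyperbolic (p q : ℕ) (hq : 1 ≤ q) (hpq : q ≤ p) (r : ℝ) (hr : 0 < r)
    (x : Fin (p + q) → ℝ)
    (hx0 : ip p q x x = -r ^ 2) (hx1 : 0 < vent x p + vent x (p + 1)) :
    orb (ANgrp p q) x = {v | ip p q v v = -r ^ 2 ∧ 0 < vent v p + vent v (p + 1)} :=
  IwasawaAN.orb_eq_of_mapsTo_of_subset_orb
    (IwasawaAN.mapsTo_hyperboloidSheet_of_mem_ANgrp hq hpq r)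
    (IwasawaAN.hyperboloidSheet_subset_orb hq hpq hr) ⟨hx0, hx1⟩
end
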